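/- For a symmetric positive semidefinite matrix Q = I − WᵀW with ‖Q‖₂ < 1, the Björck–Bowie series W(I + Σ_{p≥1} binom(−1/2, p)(−Q)^p) converges to W(WᵀW)^{−1/2}, which has orthonormal columns. -/

import Mathlib

open Matrix

/-- Generalized binomial coefficient `binom(r, p) = r(r-1)⋯(r-p+1)/p!`. -/
noncomputable def genBinom (r : ℝ) (p : ℕ) : ℝ :=
  (∏ i ∈ Finset.range p, (r - i)) / Nat.factorial p

namespace BB

noncomputable def c (p : ℕ) : ℝ := genBinom (-(1/2)) p

lemma c_zero : c 0 = 1 := by simp [c, genBinom]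

lemma c_succ (p : ℕ) : c (p + 1) = c p * ((-(1/2) - p) / (p + 1)) := by
  have h1 : (Nat.factorial p : ℝ) ≠ 0 := by exact_mod_cast (Nat.factorial_pos p).ne'
  have h2 : ((p : ℝ) + 1) ≠ 0 := by positivity
  simp only [c, genBinom, Finset.prod_range_succ, Nat.factorial_succ]
  push_cast
  rw [div_mul_div_comm, mul_comm ((p : ℝ) + 1) (Nat.factorial p : ℝ)]

noncomputable def a (p : ℕ) : ℝ := (-1) ^ p * c p

lemma a_zero : a 0 = 1 := by simp [a, c_zero]

lemma a_succ (p : ℕ) : a (p + 1) = a p * ((p + 1/2) / (p + 1)) := by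
  simp only [a, c_succ, pow_succ]
  ring_nf

lemma a_nonneg (p : ℕ) : 0 ≤ a p := by
  induction p with
  | zero => simp [a_zero]
  | succ p ih =>
    rw [a_succ]
    positivity

lemma a_succ_le (p : ℕ) : a (p + 1) ≤ a p := by
  rw [a_succ]
  have h1 : (p + 1/2 : ℝ) / (p + 1) ≤ 1 := by
    rw [div_le_one (by positivity)]; linarith
  nlinarith [a_nonneg p]

lemma a_le_one (p : ℕ) : a p ≤ 1 := by
  induction p with
  | zero => simp [a_zero]
  | succ p ih => exact (a_succ_le p).trans ih

lemma c_eq (p : ℕ) : c p = (-1) ^ p * a p := by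
  simp [a, ← mul_assoc, ← mul_pow]

lemma abs_c (p : ℕ) : |c p| = a p := by
  rw [c_eq, abs_mul, abs_pow, abs_neg, abs_one, one_pow, one_mul,
    abs_of_nonneg (a_nonneg p)]

lemma abs_c_le_one (p : ℕ) : |c p| ≤ 1 := by rw [abs_c]; exact a_le_one p

noncomputable def S (n : ℕ) : ℝ := ∑ i ∈ Finset.range (n + 1), c i * c (n - i)

noncomputable def T (n : ℕ) : ℝ := ∑ i ∈ Finset.range (n + 1), (i : ℝ) * (c i * c (n - i))

lemma twoT (n : ℕ) : 2 * T n = n * S n := by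
  have hrefl : T n = ∑ i ∈ Finset.range (n + 1), ((n - i : ℕ) : ℝ) * (c (n - i) * c i) := by
    rw [T, ← Finset.sum_range_reflect]
    apply Finset.sum_congr rfl
    intro i hi
    have hi' : i ≤ n := Nat.lt_succ_iff.mp (Finset.mem_range.mp hi)
    simp only [Nat.add_sub_cancel]
    rw [Nat.sub_sub_self hi']
  have : 2 * T n = ∑ i ∈ Finset.range (n + 1),
      ((i : ℝ) + ((n - i : ℕ) : ℝ)) * (c i * c (n - i)) := by
    rw [two_mul]
    nth_rewrite 2 [hrefl]
    rw [T, ← Finset.sum_add_distrib]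
    apply Finset.sum_congr rfl
    intro i _
    ring
  rw [this, S, Finset.mul_sum]
  apply Finset.sum_congr rfl
  intro i hi
  have hi' : i ≤ n := Nat.lt_succ_iff.mp (Finset.mem_range.mp hi)
  have : ((i : ℝ) + ((n - i : ℕ) : ℝ)) = n := by
    rw [Nat.cast_sub hi']; ring
  rw [this]

lemma T_succ (n : ℕ) : T (n + 1) = -(1/2) * S n - T n := by
  have step1 : T (n + 1) = ∑ i ∈ Finset.range (n + 1),
      ((i + 1 : ℕ) : ℝ) * (c (i + 1) * c (n - i)) := by
    rw [T, Finset.sum_range_succ']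
    simp [Nat.succ_sub_succ]
  rw [step1]
  have step2 : ∀ i ∈ Finset.range (n + 1),
      ((i + 1 : ℕ) : ℝ) * (c (i + 1) * c (n - i)) =
      (-(1/2) - i) * (c i * c (n - i)) := by
    intro i _
    have h2 : ((i : ℝ) + 1) ≠ 0 := by positivity
    rw [c_succ]
    push_cast
    field_simp
  rw [Finset.sum_congr rfl step2, S, T, Finset.mul_sum, ← Finset.sum_sub_distrib]
  exact Finset.sum_congr rfl fun i _ => by ring

lemma S_eq (n : ℕ) : S n = (-1) ^ n := by
  induction n with
  | zero => simp [S, c_zero]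
  | succ n ih =>
    have h1 := twoT (n + 1)
    have h2 := T_succ n
    have h3 := twoT n
    have hne : ((n : ℝ) + 1) ≠ 0 := by positivity
    have key : ((n : ℝ) + 1) * S (n + 1) = ((n : ℝ) + 1) * (-S n) := by
      push_cast at h1; linarith
    have h4 := mul_left_cancel₀ hne key
    rw [h4, ih, pow_succ]; ring

end BB

namespace BB

lemma summable_norm (x : ℝ) (hx : |x| < 1) : Summable (fun p => ‖c p * x ^ p‖) := by
  apply Summable.of_nonneg_of_le (fun p => norm_nonneg _) (fun p => ?_)
    (summable_geometric_of_lt_one (abs_nonneg x) hx)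
  rw [norm_mul, norm_pow]
  calc ‖c p‖ * ‖x‖ ^ p ≤ 1 * ‖x‖ ^ p := by
        apply mul_le_mul_of_nonneg_right (abs_c_le_one p) (by positivity)
    _ = |x| ^ p := by rw [one_mul]; norm_num
  
lemma summable (x : ℝ) (hx : |x| < 1) : Summable (fun p => c p * x ^ p) :=
  (summable_norm x hx).of_norm

noncomputable def f (x : ℝ) : ℝ := ∑' p, c p * x ^ p

lemma f_sq (x : ℝ) (hx : |x| < 1) : f x ^ 2 = (1 + x)⁻¹ := by
  have hs := summable_norm x hx
  have h1 : f x ^ 2 = ∑' n, ∑ kl ∈ Finset.HasAntidiagonal.antidiagonal n,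
      (c kl.1 * x ^ kl.1) * (c kl.2 * x ^ kl.2) := by
    rw [pow_two, f, tsum_mul_tsum_eq_tsum_sum_antidiagonal_of_summable_norm hs hs]
  have h2 : ∀ n : ℕ, ∑ kl ∈ Finset.HasAntidiagonal.antidiagonal n,
      (c kl.1 * x ^ kl.1) * (c kl.2 * x ^ kl.2) = (-x) ^ n := by
    intro n
    rw [Finset.Nat.sum_antidiagonal_eq_sum_range_succ_mk]
    have : ∀ i ∈ Finset.range (n + 1),
        (c i * x ^ i) * (c (n - i) * x ^ (n - i)) = (c i * c (n - i)) * x ^ n := by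
      intro i hi
      have hi' : i ≤ n := Nat.lt_succ_iff.mp (Finset.mem_range.mp hi)
      have hxp : x ^ i * x ^ (n - i) = x ^ n := by
        rw [← pow_add, Nat.add_sub_cancel' hi']
      linear_combination (c i * c (n - i)) * hxp
    rw [Finset.sum_congr rfl this, ← Finset.sum_mul, ← S, S_eq, ← neg_one_mul x, mul_pow]
  simp_rw [h1, h2]
  rw [tsum_geometric_of_norm_lt_one (by rwa [norm_neg, Real.norm_eq_abs]), sub_neg_eq_add]

lemma c_one : c 1 = -(1/2) := by
  have := c_succ 0
  simpa [c_zero] using this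

lemma f_pos (x : ℝ) (hx : |x| < 1) : 0 < f x := by
  have hs := summable x hx
  set g : ℕ → ℝ := fun p => c p * x ^ p with hg
  have he : Summable fun k => g (2 * k) := hs.comp_injective (fun a b h => by omega)
  have ho : Summable fun k => g (2 * k + 1) := hs.comp_injective (fun a b h => by omega)
  have hpair : Summable fun k => g (2 * k) + g (2 * k + 1) := he.add ho
  have hfx : f x = ∑' k, (g (2 * k) + g (2 * k + 1)) := by
    rw [f, ← tsum_even_add_odd he ho, Summable.tsum_add he ho]
  have hnn : ∀ k : ℕ, 0 ≤ g (2 * k) + g (2 * k + 1) := by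
    intro k
    have h1 : g (2 * k) + g (2 * k + 1) = x ^ (2 * k) * (a (2 * k) - a (2 * k + 1) * x) := by
      have e1 : ((-1 : ℝ)) ^ (2 * k) = 1 := by rw [pow_mul]; norm_num
      have e2 : ((-1 : ℝ)) ^ (2 * k + 1) = -1 := by rw [pow_succ, e1]; norm_num
      simp only [hg, c_eq, e1, e2]
      ring
    rw [h1]
    have h2 : a (2 * k + 1) * x ≤ a (2 * k) := by
      calc a (2 * k + 1) * x ≤ a (2 * k + 1) * |x| := by
            nlinarith [a_nonneg (2 * k + 1), le_abs_self x]
        _ ≤ a (2 * k + 1) * 1 := by nlinarith [a_nonneg (2 * k + 1)]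
        _ ≤ a (2 * k) := by rw [mul_one]; exact a_succ_le _
    have h3 : (0 : ℝ) ≤ x ^ (2 * k) := by rw [pow_mul]; positivity
    nlinarith
  have hfirst : g 0 + g 1 ≤ f x := by
    rw [hfx]
    exact Summable.le_tsum hpair 0 (fun k _ => hnn k)
  have : g 0 + g 1 = 1 - x / 2 := by
    simp [hg, c_zero, c_one]; ring
  rw [this] at hfirst
  have := abs_lt.mp hx
  linarith

lemma f_hasSum (x : ℝ) (hx : |x| < 1) :
    HasSum (fun p => c p * x ^ p) ((Real.sqrt (1 + x))⁻¹) := by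
  have hs := summable x hx
  have hval : f x = (Real.sqrt (1 + x))⁻¹ := by
    have h1 : f x = Real.sqrt (f x ^ 2) := (Real.sqrt_sq (f_pos x hx).le).symm
    rw [h1, f_sq x hx, Real.sqrt_inv]
  rw [← hval]
  exact hs.hasSum

lemma hasSum_scalar (d : ℝ) (hd : |1 - d| < 1) :
    HasSum (fun p => c p * (d - 1) ^ p) ((Real.sqrt d)⁻¹) := by
  have hx : |d - 1| < 1 := by rw [abs_sub_comm]; exact hd
  have := f_hasSum (d - 1) hx
  rwa [show 1 + (d - 1) = d by ring] at this

end BB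

/-- The positive semidefinite square root, as `Matrix.PosSemidef.sqrt` was defined in Mathlib
of December 2024 (since removed). -/
noncomputable def Matrix.PosSemidef.sqrt {n : Type*} [Fintype n] [DecidableEq n]
    {A : Matrix n n ℝ} (hA : A.PosSemidef) : Matrix n n ℝ :=
  hA.1.eigenvectorUnitary.1 * diagonal ((↑) ∘ (√·) ∘ hA.1.eigenvalues) *
  (star hA.1.eigenvectorUnitary : Matrix n n ℝ)

theorem stmt18 {n m : ℕ} (W : Matrix (Fin n) (Fin m) ℝ)
    (hrank : W.rank = m)
    (hPSD : (Wᵀ * W).PosSemidef)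
    (hQ : ‖Matrix.toEuclideanCLM (𝕜 := ℝ) (n := Fin m) (1 - Wᵀ * W)‖ < 1) :
    HasSum (fun p : ℕ => genBinom (-(1 / 2)) p • (W * (-(1 - Wᵀ * W)) ^ p))
      (W * (Matrix.PosSemidef.sqrt hPSD)⁻¹) ∧
    (W * (Matrix.PosSemidef.sqrt hPSD)⁻¹)ᵀ * (W * (Matrix.PosSemidef.sqrt hPSD)⁻¹) = 1 := by
  classical
  set A := Wᵀ * W with hA
  have hH : A.IsHermitian := hPSD.1
  set U : Matrix (Fin m) (Fin m) ℝ := (hH.eigenvectorUnitary : Matrix (Fin m) (Fin m) ℝ) with hUdef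
  set d : Fin m → ℝ := hH.eigenvalues with hddef
  have hUU : U * star U = 1 := Matrix.mem_unitaryGroup_iff.mp hH.eigenvectorUnitary.2
  have hUU' : star U * U = 1 := Matrix.mem_unitaryGroup_iff'.mp hH.eigenvectorUnitary.2
  have hco : (RCLike.ofReal ∘ d : Fin m → ℝ) = d := by
    funext i; simp [RCLike.ofReal_real_eq_id]
  have spec : A = U * diagonal d * star U := by
    have := hH.spectral_theorem
    rwa [hco] at this
  -- eigenvalue bounds
  have hdb : ∀ i, |1 - d i| < 1 := by
    intro i
    have hv1 : ‖hH.eigenvectorBasis i‖ = 1 := hH.eigenvectorBasis.orthonormal.1 i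
    have hmv : (1 - A) *ᵥ ⇑(hH.eigenvectorBasis i) = (1 - d i) • ⇑(hH.eigenvectorBasis i) := by
      rw [sub_mulVec, one_mulVec, hH.mulVec_eigenvectorBasis, sub_smul, one_smul]
    have hclm : toEuclideanCLM (𝕜 := ℝ) (1 - A) (hH.eigenvectorBasis i)
        = (1 - d i) • (hH.eigenvectorBasis i) := by
      apply WithLp.ofLp_injective 2
      rw [ofLp_toEuclideanCLM]
      exact hmv
    have hb := (toEuclideanCLM (𝕜 := ℝ) (1 - A)).le_opNorm (hH.eigenvectorBasis i)
    rw [hclm, hv1, mul_one, norm_smul, hv1, mul_one, Real.norm_eq_abs] at hb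
    exact lt_of_le_of_lt hb hQ
  have hdpos : ∀ i, 0 < d i := fun i => by have := abs_lt.mp (hdb i); linarith
  have hspos : ∀ i, Real.sqrt (d i) ≠ 0 := fun i => (Real.sqrt_pos.mpr (hdpos i)).ne'
  -- inverse of sqrt
  set N : Matrix (Fin m) (Fin m) ℝ :=
    U * diagonal (fun i => (Real.sqrt (d i))⁻¹) * star U with hNdef
  have hsqrt_def : hPSD.sqrt = U * diagonal (fun i => Real.sqrt (d i)) * star U := by
    rw [Matrix.PosSemidef.sqrt]
    refine congrArg₂ _ (congrArg₂ _ rfl ?_) rfl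
    exact congrArg diagonal (funext fun i => by simp [RCLike.ofReal_real_eq_id]; rfl)
  have hsqrtN : hPSD.sqrt * N = 1 := by
    rw [hsqrt_def, hNdef]
    calc (U * diagonal (fun i => Real.sqrt (d i)) * star U) *
          (U * diagonal (fun i => (Real.sqrt (d i))⁻¹) * star U)
        = U * (diagonal (fun i => Real.sqrt (d i)) * (star U * U) *
            diagonal (fun i => (Real.sqrt (d i))⁻¹)) * star U := by
          simp only [Matrix.mul_assoc]
      _ = 1 := by
          rw [hUU', Matrix.mul_one, diagonal_mul_diagonal]
          have : (fun i => Real.sqrt (d i) * (Real.sqrt (d i))⁻¹) = fun _ => (1 : ℝ) := by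
            funext i; exact mul_inv_cancel₀ (hspos i)
          rw [this, diagonal_one, Matrix.mul_one, hUU]
  have hNsqrt : N * hPSD.sqrt = 1 := by
    rw [hsqrt_def, hNdef]
    calc (U * diagonal (fun i => (Real.sqrt (d i))⁻¹) * star U) *
          (U * diagonal (fun i => Real.sqrt (d i)) * star U)
        = U * (diagonal (fun i => (Real.sqrt (d i))⁻¹) * (star U * U) *
            diagonal (fun i => Real.sqrt (d i))) * star U := by
          simp only [Matrix.mul_assoc]
      _ = 1 := by
          rw [hUU', Matrix.mul_one, diagonal_mul_diagonal]
          have : (fun i => (Real.sqrt (d i))⁻¹ * Real.sqrt (d i)) = fun _ => (1 : ℝ) := by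
            funext i; exact inv_mul_cancel₀ (hspos i)
          rw [this, diagonal_one, Matrix.mul_one, hUU]
  have hinv : (hPSD.sqrt)⁻¹ = N := inv_eq_right_inv hsqrtN
  -- powers
  have hX : -(1 - A) = U * diagonal (fun i => d i - 1) * star U := by
    have : diagonal (fun i => d i - 1) = diagonal d - 1 := by
      rw [← diagonal_one, diagonal_sub]
    rw [neg_sub, this, Matrix.mul_sub, Matrix.sub_mul, Matrix.mul_one, hUU, ← spec]
  have hXpow : ∀ p : ℕ, (-(1 - A)) ^ p = U * diagonal (fun i => (d i - 1) ^ p) * star U := by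
    intro p
    induction p with
    | zero =>
      simp only [pow_zero]
      rw [diagonal_one, Matrix.mul_one, hUU]
    | succ p ih =>
      rw [pow_succ, ih, hX]
      calc (U * diagonal (fun i => (d i - 1) ^ p) * star U) *
            (U * diagonal (fun i => d i - 1) * star U)
          = U * (diagonal (fun i => (d i - 1) ^ p) * (star U * U) *
              diagonal (fun i => d i - 1)) * star U := by
            simp only [Matrix.mul_assoc]
        _ = U * diagonal (fun i => (d i - 1) ^ (p + 1)) * star U := by
            rw [hUU', Matrix.mul_one, diagonal_mul_diagonal]
            have : (fun i => (d i - 1) ^ p * (d i - 1)) = fun i => (d i - 1) ^ (p + 1) :=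
              funext fun i => (pow_succ _ _).symm
            rw [this]
  -- the continuous linear map
  let φ : Matrix (Fin m) (Fin m) ℝ →ₗ[ℝ] Matrix (Fin n) (Fin m) ℝ :=
    { toFun := fun X => W * (U * X * star U)
      map_add' := fun X Y => by
        simp only [Matrix.mul_add, Matrix.add_mul]
      map_smul' := fun r X => by
        simp only [Matrix.mul_smul, Matrix.smul_mul, RingHom.id_apply] }
  have hdiag : HasSum (fun p : ℕ => diagonal (fun i => BB.c p * (d i - 1) ^ p))
      (diagonal fun i => (Real.sqrt (d i))⁻¹) := by
    apply Pi.hasSum.mpr; intro i; apply Pi.hasSum.mpr; intro j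
    rcases eq_or_ne i j with rfl | hij
    · simpa only [diagonal_apply_eq] using BB.hasSum_scalar (d i) (hdb i)
    · simpa only [diagonal_apply_ne _ hij] using hasSum_zero
  have hmain := hdiag.mapL (LinearMap.toContinuousLinearMap φ)
  have hterm : ∀ p : ℕ, (LinearMap.toContinuousLinearMap φ)
      (diagonal (fun i => BB.c p * (d i - 1) ^ p))
      = genBinom (-(1 / 2)) p • (W * (-(1 - A)) ^ p) := by
    intro p
    have h1 : (diagonal (fun i => BB.c p * (d i - 1) ^ p) : Matrix (Fin m) (Fin m) ℝ)
        = BB.c p • diagonal (fun i => (d i - 1) ^ p) := by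
      rw [← diagonal_smul]
      congr 1
    rw [LinearMap.coe_toContinuousLinearMap', h1, LinearMap.map_smul]
    have h2 : φ (diagonal fun i => (d i - 1) ^ p) = W * (-(1 - A)) ^ p := by
      show W * (U * diagonal (fun i => (d i - 1) ^ p) * star U) = W * (-(1 - A)) ^ p
      rw [hXpow p]
    rw [h2]
    rfl
  have htgt : (LinearMap.toContinuousLinearMap φ) (diagonal fun i => (Real.sqrt (d i))⁻¹)
      = W * (hPSD.sqrt)⁻¹ := by
    rw [LinearMap.coe_toContinuousLinearMap']
    show W * (U * diagonal (fun i => (Real.sqrt (d i))⁻¹) * star U) = W * (hPSD.sqrt)⁻¹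
    rw [hinv, hNdef]
  constructor
  · rw [← funext hterm, ← htgt] at *
    exact hmain
  · have hsym : (hPSD.sqrt)ᵀ = hPSD.sqrt := by
      rw [hsqrt_def]
      simp [Matrix.transpose_mul, Matrix.star_eq_conjTranspose,
        conjTranspose_eq_transpose_of_trivial, Matrix.mul_assoc]
    have hinvT : ((hPSD.sqrt)⁻¹)ᵀ = (hPSD.sqrt)⁻¹ := by
      rw [transpose_nonsing_inv, hsym]
    have hsms : hPSD.sqrt * hPSD.sqrt = A := by
      rw [hsqrt_def, spec]
      simp only [Matrix.mul_assoc]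
      rw [← Matrix.mul_assoc (star U) U, hUU', Matrix.one_mul,
        ← Matrix.mul_assoc (diagonal _), diagonal_mul_diagonal]
      have : (fun i => Real.sqrt (d i) * Real.sqrt (d i)) = d := by
        funext i; exact Real.mul_self_sqrt (hdpos i).le
      rw [this]
    rw [transpose_mul, hinvT]
    calc (hPSD.sqrt)⁻¹ * Wᵀ * (W * (hPSD.sqrt)⁻¹)
        = (hPSD.sqrt)⁻¹ * (hPSD.sqrt * hPSD.sqrt) * (hPSD.sqrt)⁻¹ := by
          rw [hsms]
          simp only [Matrix.mul_assoc]
          rw [← Matrix.mul_assoc Wᵀ W]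
      _ = ((hPSD.sqrt)⁻¹ * hPSD.sqrt) * (hPSD.sqrt * (hPSD.sqrt)⁻¹) := by
          simp only [Matrix.mul_assoc]
      _ = 1 := by rw [hinv, hNsqrt, hsqrtN, Matrix.one_mul]
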